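/- Let w be a word over {1,…,n} and S, T ⊆ {1,…,n} with |S| = |T| and S < T. Then there exists N ∈ [S,T] with N ≠ S such that |w|_N ≥ min(|w|_S, |w|_T) and the order interval [S,N] has chain length at most n. -/

import Mathlib

/-!
Let `A = S \ T` and `B = T \ S`, with `j`-th smallest elements `aⱼ` and `bⱼ`. Since `S ≤ T`
means that `S` has at least as many elements `≤ x` as `T` for every `x`, the same holds for `A`
and `B`; hence `aⱼ < bⱼ`, and `N = S - aⱼ + bⱼ` lies in `[S, T]`, because `S` has strictly more
elements `≤ x` than `T` for `aⱼ ≤ x < bⱼ`. The differences `|w|_{bⱼ} - |w|_{aⱼ}` sum to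
`|w|_T - |w|_S`, so for the `j` maximising them `|w|_N ≥ min(|w|_S, |w|_T)`. Finally, the
element sum strictly increases along a chain of sets of equal size, and it increases by
`bⱼ - aⱼ ≤ n - 1` from `S` to `N`.
-/

/-- The i-th smallest element (0-indexed) of a finite set of naturals. -/
def nth (S : Finset ℕ) (i : ℕ) : ℕ := (S.sort (· ≤ ·)).getD i 0

/-- The order on 2^[n]: S ≤ T iff |S| ≥ |T| and S^i ≤ T^i for i ≤ |T|. -/
def gale (S T : Finset ℕ) : Prop :=
  T.card ≤ S.card ∧ ∀ i < T.card, nth S i ≤ nth T i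

/-- |w|_N : number of occurrences in w of letters from N. -/
def wcount (w : List ℕ) (N : Finset ℕ) : ℕ := (w.filter (· ∈ N)).length

/-- A strictly increasing chain from S to T inside the order interval [S,T]. -/
def isChain (S T : Finset ℕ) (P : List (Finset ℕ)) : Prop :=
  P.head? = some S ∧ P.getLast? = some T ∧
  P.Chain' (fun A B => gale A B ∧ A ≠ B) ∧
  ∀ Q ∈ P, gale S Q ∧ gale Q T

/-- The join S ∨ T in 2^[n]. -/
def galeJoin (S T : Finset ℕ) : Finset ℕ :=
  (Finset.range (min S.card T.card)).image fun i => max (nth S i) (nth T i)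

/-- The meet S ∧ T in 2^[n]. -/
def galeMeet (S T : Finset ℕ) : Finset ℕ :=
  ((Finset.range (min S.card T.card)).image fun i => min (nth S i) (nth T i)) ∪
    (if T.card ≤ S.card then (Finset.Ico T.card S.card).image (nth S)
     else (Finset.Ico S.card T.card).image (nth T))

open Finset

def numLE (S : Finset ℕ) (x : ℕ) : ℕ := #(S.filter (· ≤ x))

lemma nth_mem {S : Finset ℕ} {i : ℕ} (h : i < #S) : nth S i ∈ S := by
  have hl : i < (S.sort (· ≤ ·)).length := by rwa [length_sort]
  rw [nth, List.getD_eq_getElem _ _ hl]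
  exact (mem_sort _).1 (List.getElem_mem _)

lemma getD_le_iff_lt_length_filter {l : List ℕ} (hl : l.Pairwise (· ≤ ·)) {i : ℕ}
    (hi : i < l.length) (x : ℕ) : l.getD i 0 ≤ x ↔ i < (l.filter (· ≤ x)).length := by
  induction l generalizing i with
  | nil => simp at hi
  | cons a l ih =>
    obtain ⟨ha, hl⟩ := List.pairwise_cons.1 hl
    by_cases hax : a ≤ x
    · rw [List.filter_cons_of_pos (by simpa), List.length_cons]
      cases i with
      | zero => simpa using hax
      | succ i =>
        rw [List.getD_cons_succ, ih hl (by simpa using hi), Nat.succ_lt_succ_iff]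
    · have hnil : l.filter (· ≤ x) = [] :=
        List.filter_eq_nil_iff.2 fun y hy h => hax ((ha y hy).trans (by simpa using h))
      rw [List.filter_cons_of_neg (by simpa using hax), hnil, List.length_nil]
      refine iff_of_false ?_ (Nat.not_lt_zero _)
      cases i with
      | zero => exact hax
      | succ i =>
        have hi : i < l.length := by simpa using hi
        rw [List.getD_cons_succ, List.getD_eq_getElem _ _ hi]
        exact fun h => hax ((ha _ (List.getElem_mem hi)).trans h)

lemma numLE_eq_length_filter_sort (S : Finset ℕ) (x : ℕ) :
    numLE S x = ((S.sort (· ≤ ·)).filter (· ≤ x)).length := by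
  rw [numLE, Finset.card, filter_val, ← Multiset.coe_card, ← Multiset.filter_coe, sort_eq]

lemma nth_le_iff_lt_numLE {S : Finset ℕ} {i : ℕ} (h : i < #S) (x : ℕ) :
    nth S i ≤ x ↔ i < numLE S x := by
  rw [numLE_eq_length_filter_sort]
  exact getD_le_iff_lt_length_filter (pairwise_sort _ _) (by rwa [length_sort]) x

lemma gale_iff_numLE_le {S T : Finset ℕ} (h : #T ≤ #S) :
    gale S T ↔ ∀ x, numLE T x ≤ numLE S x := by
  refine ⟨fun hST x => ?_, fun hc => ⟨h, fun i hi => ?_⟩⟩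
  · by_contra! hlt
    have hk : numLE S x < #T := hlt.trans_le (card_filter_le _ _)
    have hTx : nth T (numLE S x) ≤ x := (nth_le_iff_lt_numLE hk x).2 hlt
    exact lt_irrefl _ ((nth_le_iff_lt_numLE (hk.trans_le h) x).1 ((hST.2 _ hk).trans hTx))
  · exact (nth_le_iff_lt_numLE (hi.trans_le h) _).2
      (((nth_le_iff_lt_numLE hi _).1 le_rfl).trans_le (hc _))

lemma sum_range_getD {M : Type*} [AddCommMonoid M] (f : ℕ → M) (l : List ℕ) :
    ∑ i ∈ range l.length, f (l.getD i 0) = (l.map f).sum := by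
  induction l with
  | nil => simp
  | cons a l ih =>
    rw [List.length_cons, sum_range_succ', List.map_cons, List.sum_cons, ← ih, add_comm]
    simp only [List.getD_cons_succ, List.getD_cons_zero]

lemma sum_range_nth {M : Type*} [AddCommMonoid M] (f : ℕ → M) (S : Finset ℕ) :
    ∑ i ∈ range #S, f (nth S i) = ∑ x ∈ S, f x := by
  conv_rhs => rw [sum_eq_multiset_sum, ← sort_eq S (· ≤ ·), Multiset.map_coe, Multiset.sum_coe,
    ← sum_range_getD, length_sort]
  rfl

lemma eq_of_nth_eq {S T : Finset ℕ} (hc : #S = #T) (h : ∀ i < #S, nth S i = nth T i) :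
    S = T := by
  have hsort : S.sort (· ≤ ·) = T.sort (· ≤ ·) := by
    refine List.ext_getElem (by rw [length_sort, length_sort, hc]) fun i hS hT => ?_
    have := h i (by rwa [length_sort] at hS)
    rwa [nth, nth, List.getD_eq_getElem _ _ hS, List.getD_eq_getElem _ _ hT] at this
  rw [← sort_toFinset S (· ≤ ·), hsort, sort_toFinset]

lemma sum_lt_sum_of_gale {S T : Finset ℕ} (hST : gale S T) (hc : #S = #T) (hne : S ≠ T) :
    ∑ x ∈ S, x < ∑ x ∈ T, x := by
  calc ∑ x ∈ S, x = ∑ i ∈ range #S, nth S i := (sum_range_nth id S).symm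
    _ < ∑ i ∈ range #S, nth T i := by
      refine sum_lt_sum (fun i hi => hST.2 i (hc ▸ mem_range.1 hi)) ?_
      by_contra! hle
      exact hne (eq_of_nth_eq hc fun i hi =>
        (hST.2 i (hc ▸ hi)).antisymm (hle i (mem_range.2 hi)))
    _ = ∑ x ∈ T, x := hc ▸ sum_range_nth id T

lemma add_length_le_of_isChain_lt : ∀ {l : List ℕ} {a b : ℕ}, l.IsChain (· < ·) →
    l.head? = some a → l.getLast? = some b → a + l.length ≤ b + 1
  | [], _, _, _, h, _ => by simp at h
  | [x], a, b, _, ha, hb => by simp_all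
  | x :: y :: l, a, b, hc, ha, hb => by
    rw [List.isChain_cons_cons] at hc
    rw [List.getLast?_cons_cons] at hb
    have := add_length_le_of_isChain_lt hc.2 rfl hb
    simp only [List.head?_cons, Option.some.injEq, List.length_cons] at ha this ⊢
    omega

lemma sum_add_length_le_of_isChain {S N : Finset ℕ} (hN : #N = #S) {P : List (Finset ℕ)}
    (hP : isChain S N P) : ∑ x ∈ S, x + P.length ≤ ∑ x ∈ N, x + 1 := by
  obtain ⟨hhead, hlast, hchain, hmem⟩ := hP
  have hcard (Q) (hQ : Q ∈ P) : #Q = #S :=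
    le_antisymm (hmem Q hQ).1.1 (hN ▸ (hmem Q hQ).2.1)
  have hsums : (P.map fun Q => ∑ x ∈ Q, x).IsChain (· < ·) :=
    (List.isChain_map _).2 <| hchain.imp_of_mem_imp fun A B hA hB h =>
      sum_lt_sum_of_gale h.1 (by rw [hcard A hA, hcard B hB]) h.2
  simpa using add_length_le_of_isChain_lt hsums
    (by rw [List.head?_map, hhead]; rfl) (by rw [List.getLast?_map, hlast]; rfl)

def exchange (S : Finset ℕ) (u v : ℕ) : Finset ℕ := insert v (S.erase u)

section exchange

variable {S : Finset ℕ} {u v : ℕ}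

lemma exchange_ne (hv : v ∉ S) : exchange S u v ≠ S :=
  fun h => hv (h ▸ mem_insert_self v _)

lemma sum_exchange {M : Type*} [AddCommMonoid M] (f : ℕ → M) (hu : u ∈ S) (hv : v ∉ S) :
    ∑ x ∈ exchange S u v, f x + f u = ∑ x ∈ S, f x + f v := by
  rw [exchange, sum_insert fun h => hv (mem_of_mem_erase h), add_assoc, sum_erase_add _ _ hu,
    add_comm]

lemma card_exchange (hu : u ∈ S) (hv : v ∉ S) : #(exchange S u v) = #S := by
  have := sum_exchange (fun _ => (1 : ℕ)) hu hv
  rwa [← card_eq_sum_ones, ← card_eq_sum_ones, add_left_inj] at this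

lemma numLE_exchange (hu : u ∈ S) (hv : v ∉ S) (x : ℕ) :
    numLE (exchange S u v) x + (if u ≤ x then 1 else 0) = numLE S x + if v ≤ x then 1 else 0 := by
  simpa only [numLE, card_filter] using sum_exchange (fun y => if y ≤ x then 1 else 0) hu hv

lemma gale_exchange (hu : u ∈ S) (hv : v ∉ S) (huv : u < v) : gale S (exchange S u v) := by
  rw [gale_iff_numLE_le (card_exchange hu hv).le]
  intro x
  have key := numLE_exchange hu hv x
  split_ifs at key <;> omega

lemma exchange_gale {T : Finset ℕ} (hu : u ∈ S) (hv : v ∉ S) (hcard : #S = #T)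
    (hST : gale S T) (hgap : ∀ x, u ≤ x → x < v → numLE T x < numLE S x) :
    gale (exchange S u v) T := by
  rw [gale_iff_numLE_le (by rw [card_exchange hu hv, hcard])]
  rw [gale_iff_numLE_le hcard.ge] at hST
  intro x
  have key := numLE_exchange hu hv x
  have := hST x
  split_ifs at key with hux hvx
  · omega
  · have := hgap x hux (not_le.1 hvx)
    omega
  all_goals omega

end exchange

section sdiff

variable {S T : Finset ℕ}

lemma numLE_sdiff_le_numLE_sdiff {x : ℕ} :
    numLE (S \ T) x ≤ numLE (T \ S) x ↔ numLE S x ≤ numLE T x := by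
  simp only [numLE, card_filter]
  exact sum_sdiff_le_sum_sdiff

lemma numLE_sdiff_lt_numLE_sdiff {x : ℕ} :
    numLE (S \ T) x < numLE (T \ S) x ↔ numLE S x < numLE T x := by
  simp only [numLE, card_filter]
  exact sum_sdiff_lt_sum_sdiff

lemma gale_exchange_nth_sdiff (hcard : #S = #T) (hST : gale S T) {j : ℕ} (hj : j < #(S \ T)) :
    gale S (exchange S (nth (S \ T) j) (nth (T \ S) j)) ∧
      gale (exchange S (nth (S \ T) j) (nth (T \ S) j)) T := by
  have hjB : j < #(T \ S) := card_sdiff_comm hcard ▸ hj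
  have hu := mem_sdiff.1 (nth_mem hj)
  have hv := mem_sdiff.1 (nth_mem hjB)
  have hle (x : ℕ) : numLE (T \ S) x ≤ numLE (S \ T) x :=
    numLE_sdiff_le_numLE_sdiff.2 ((gale_iff_numLE_le hcard.ge).1 hST x)
  have huv : nth (S \ T) j < nth (T \ S) j := by
    refine lt_of_le_of_ne ((nth_le_iff_lt_numLE hj _).2 ?_) fun h => hv.2 (h ▸ hu.1)
    exact ((nth_le_iff_lt_numLE hjB _).1 le_rfl).trans_le (hle _)
  have hgap (x : ℕ) (hux : nth (S \ T) j ≤ x) (hxv : x < nth (T \ S) j) :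
      numLE T x < numLE S x := by
    refine numLE_sdiff_lt_numLE_sdiff.1 (lt_of_le_of_lt ?_ ((nth_le_iff_lt_numLE hj x).1 hux))
    exact not_lt.1 fun h => hxv.not_ge ((nth_le_iff_lt_numLE hjB x).2 h)
  exact ⟨gale_exchange hu.1 hv.2 huv, exchange_gale hu.1 hv.2 hcard hST hgap⟩

lemma sum_range_sub_nth_sdiff {M : Type*} [AddCommGroup M] (f : ℕ → M) (hcard : #S = #T) :
    ∑ i ∈ range #(S \ T), (f (nth (T \ S) i) - f (nth (S \ T) i)) =
      ∑ x ∈ T, f x - ∑ x ∈ S, f x := by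
  rw [sum_sub_distrib, sum_range_nth f (S \ T), card_sdiff_comm hcard, sum_range_nth,
    sum_sdiff_sub_sum_sdiff]

end sdiff

lemma exists_min_zero_sum_le {ι M : Type*} [AddCommGroup M] [LinearOrder M]
    [IsOrderedAddMonoid M] {s : Finset ι} (hs : s.Nonempty) (f : ι → M) :
    ∃ j ∈ s, min 0 (∑ i ∈ s, f i) ≤ f j := by
  obtain ⟨j, hj, hmax⟩ := exists_max_image s f hs
  refine ⟨j, hj, ?_⟩
  rcases le_or_gt 0 (f j) with hpos | hneg
  · exact (min_le_left _ _).trans hpos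
  · calc min 0 (∑ i ∈ s, f i) ≤ ∑ i ∈ s, f i := min_le_right _ _
      _ ≤ #s • f j := sum_le_card_nsmul s f (f j) hmax
      _ ≤ 1 • f j := nsmul_le_nsmul_left_of_nonpos hneg.le (card_pos.2 hs)
      _ = f j := one_nsmul _

lemma exists_min_le_sum_exchange {M : Type*} [AddCommGroup M] [LinearOrder M]
    [IsOrderedAddMonoid M] (f : ℕ → M) {S T : Finset ℕ} (hcard : #S = #T) (hne : S ≠ T) :
    ∃ j < #(S \ T), min (∑ x ∈ S, f x) (∑ x ∈ T, f x) ≤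
      ∑ x ∈ exchange S (nth (S \ T) j) (nth (T \ S) j), f x := by
  have hA : (range #(S \ T)).Nonempty := by
    simpa using fun h => hne (eq_of_subset_of_card_le h hcard.ge)
  obtain ⟨j, hj, hmin⟩ := exists_min_zero_sum_le hA
    fun i => f (nth (T \ S) i) - f (nth (S \ T) i)
  rw [sum_range_sub_nth_sdiff f hcard] at hmin
  have hj := mem_range.1 hj
  refine ⟨j, hj, ?_⟩
  have hsum := sum_exchange f (mem_sdiff.1 (nth_mem hj)).1
    (mem_sdiff.1 (nth_mem (card_sdiff_comm hcard ▸ hj))).2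
  calc min (∑ x ∈ S, f x) (∑ x ∈ T, f x)
      = ∑ x ∈ S, f x + min 0 (∑ x ∈ T, f x - ∑ x ∈ S, f x) := by
        rw [← min_add_add_left, add_zero, add_sub_cancel]
    _ ≤ ∑ x ∈ S, f x + (f (nth (T \ S) j) - f (nth (S \ T) j)) := add_le_add_right hmin _
    _ = _ := by rw [← add_sub_assoc, ← hsum, add_sub_cancel_right]

lemma wcount_eq_sum_count (w : List ℕ) (N : Finset ℕ) : wcount w N = ∑ x ∈ N, w.count x := by
  rw [wcount, ← Multiset.coe_card, ← Multiset.sum_count_eq_card (s := N) (by simp)]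
  exact sum_congr rfl fun x hx => by rw [Multiset.coe_count, List.count_filter (by simpa)]

theorem stmt_11_general (n : ℕ) (w : List ℕ)
    (S T : Finset ℕ) (hS : S ⊆ Finset.Icc 1 n) (hT : T ⊆ Finset.Icc 1 n)
    (hcard : S.card = T.card) (hST : gale S T) (hne : S ≠ T) :
    ∃ N : Finset ℕ, gale S N ∧ gale N T ∧ N ≠ S ∧
      min (wcount w S) (wcount w T) ≤ wcount w N ∧
      ∀ P : List (Finset ℕ), isChain S N P → P.length ≤ n := by
  obtain ⟨j, hj, hmin⟩ := exists_min_le_sum_exchange (fun x => (w.count x : ℤ)) hcard hne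
  obtain ⟨hSN, hNT⟩ := gale_exchange_nth_sdiff hcard hST hj
  have hu := mem_sdiff.1 (nth_mem hj)
  have hv := mem_sdiff.1 (nth_mem (card_sdiff_comm hcard ▸ hj))
  refine ⟨_, hSN, hNT, exchange_ne hv.2, ?_, fun P hP => ?_⟩
  · simp only [wcount_eq_sum_count]
    exact_mod_cast hmin
  · have hlen := sum_add_length_le_of_isChain (card_exchange hu.1 hv.2) hP
    have hsum := sum_exchange id hu.1 hv.2
    have hu1 := (mem_Icc.1 (hS hu.1)).1
    have hvn := (mem_Icc.1 (hT hv.1)).2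
    simp only [id] at hsum
    omega

theorem stmt_11 (n : ℕ) (w : List ℕ) (hw : ∀ x ∈ w, x ∈ Finset.Icc 1 n)
    (S T : Finset ℕ) (hS : S ⊆ Finset.Icc 1 n) (hT : T ⊆ Finset.Icc 1 n)
    (hcard : S.card = T.card) (hST : gale S T) (hne : S ≠ T) :
    ∃ N : Finset ℕ, gale S N ∧ gale N T ∧ N ≠ S ∧
      min (wcount w S) (wcount w T) ≤ wcount w N ∧
      ∀ P : List (Finset ℕ), isChain S N P → P.length ≤ n :=
  stmt_11_general n w S T hS hT hcard hST hne
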